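/- arXiv:2302.13703 — 2 statements merged into one kernel-verified Lean document; each statement's English description precedes it below -/
import Mathlib

section
/- The product action of a direct product of transitive abelian permutation groups is pre-primitive. -/
/-! A transitive abelian group `A` is pre-primitive: for an invariant partition, the elements of `A`
fixing every class setwise already move each point to every point of its class, since commuting
with a transitive group spreads that property from one point to all. The product `G × H` is
transitive and abelian. -/

open Equiv

variable {Ω : Type*}

/-- `G` is a transitive permutation group on `Ω`. -/
def IsTransitive (G : Subgroup (Perm Ω)) : Prop :=
  ∀ x y : Ω, ∃ g ∈ G, g x = y

/-- The partition (setoid) `r` of `Ω` is `G`-invariant. -/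
def IsInvariantPartition (G : Subgroup (Perm Ω)) (r : Setoid Ω) : Prop :=
  ∀ g ∈ G, ∀ x y : Ω, r.r x y → r.r (g x) (g y)

/-- The partition `r` of `Ω` is the orbit partition of the permutation group `H`. -/
def IsOrbitPartition (H : Subgroup (Perm Ω)) (r : Setoid Ω) : Prop :=
  ∀ x y : Ω, r.r x y ↔ ∃ h ∈ H, h x = y

/-- `G` is pre-primitive: every `G`-invariant partition is the orbit partition
of a subgroup of `G`. -/
def IsPrePrimitive (G : Subgroup (Perm Ω)) : Prop :=
  ∀ r : Setoid Ω, IsInvariantPartition G r → ∃ H ≤ G, IsOrbitPartition H r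

/-- `N` is a normal subgroup of the permutation group `G`. -/
def IsNormalIn (N G : Subgroup (Perm Ω)) : Prop :=
  N ≤ G ∧ ∀ g ∈ G, ∀ n ∈ N, g * n * g⁻¹ ∈ N


/-- The coordinatewise (product) action homomorphism. -/
def prodPermHom (Γ Δ : Type*) : Perm Γ × Perm Δ →* Perm (Γ × Δ) where
  toFun p := Equiv.prodCongr p.1 p.2
  map_one' := by ext ⟨a, b⟩ <;> rfl
  map_mul' p q := by ext ⟨a, b⟩ <;> rfl

/-- The direct product `G × H` in its coordinatewise product action on `Γ × Δ`,
as a subgroup of `Perm (Γ × Δ)`. -/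
def productAction {Γ Δ : Type*} (G : Subgroup (Perm Γ)) (H : Subgroup (Perm Δ)) :
    Subgroup (Perm (Γ × Δ)) :=
  (G.prod H).map (prodPermHom Γ Δ)

def blockKernel (G : Subgroup (Perm Ω)) (r : Setoid Ω) : Subgroup (Perm Ω) where
  carrier := {a | a ∈ G ∧ ∀ x, r x (a x)}
  one_mem' := ⟨G.one_mem, r.refl⟩
  mul_mem' := fun {a b} ⟨haG, ha⟩ ⟨hbG, hb⟩ =>
    ⟨G.mul_mem haG hbG, fun x => r.trans (hb x) (ha (b x))⟩
  inv_mem' := fun {a} ⟨haG, ha⟩ =>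
    ⟨G.inv_mem haG, fun x => r.symm (by simpa using ha (a⁻¹ x))⟩

theorem blockKernel_le (G : Subgroup (Perm Ω)) (r : Setoid Ω) : blockKernel G r ≤ G :=
  fun _ ha => ha.1

theorem isOrbitPartition_blockKernel {G : Subgroup (Perm Ω)} {r : Setoid Ω}
    (hG : IsTransitive G) (hcomm : ∀ a ∈ G, ∀ b ∈ G, Commute a b)
    (hr : IsInvariantPartition G r) : IsOrbitPartition (blockKernel G r) r := by
  intro x y
  constructor
  · intro hxy
    obtain ⟨b, hbG, rfl⟩ := hG x y
    refine ⟨b, ⟨hbG, fun z => ?_⟩, rfl⟩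
    obtain ⟨a, haG, rfl⟩ := hG x z
    have hab : b (a x) = a (b x) := by
      rw [← Perm.mul_apply, ← Perm.mul_apply, (hcomm a haG b hbG).eq]
    rw [hab]
    exact hr a haG x (b x) hxy
  · rintro ⟨b, ⟨-, hb⟩, rfl⟩
    exact hb x

theorem isPrePrimitive_of_isTransitive_of_commute {G : Subgroup (Perm Ω)}
    (hG : IsTransitive G) (hcomm : ∀ a ∈ G, ∀ b ∈ G, Commute a b) : IsPrePrimitive G :=
  fun r hr => ⟨blockKernel G r, blockKernel_le G r, isOrbitPartition_blockKernel hG hcomm hr⟩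

section productAction

variable {Γ Δ : Type*} {G : Subgroup (Perm Γ)} {H : Subgroup (Perm Δ)}

theorem isTransitive_productAction (hG : IsTransitive G) (hH : IsTransitive H) :
    IsTransitive (productAction G H) := by
  rintro ⟨x₁, x₂⟩ ⟨y₁, y₂⟩
  obtain ⟨g, hg, rfl⟩ := hG x₁ y₁
  obtain ⟨h, hh, rfl⟩ := hH x₂ y₂
  exact ⟨prodPermHom Γ Δ (g, h), ⟨(g, h), ⟨hg, hh⟩, rfl⟩, rfl⟩

theorem commute_of_mem_productAction (hG : ∀ g₁ ∈ G, ∀ g₂ ∈ G, Commute g₁ g₂)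
    (hH : ∀ h₁ ∈ H, ∀ h₂ ∈ H, Commute h₁ h₂) :
    ∀ a ∈ productAction G H, ∀ b ∈ productAction G H, Commute a b := by
  rintro _ ⟨⟨g₁, h₁⟩, ⟨hg₁, hh₁⟩, rfl⟩ _ ⟨⟨g₂, h₂⟩, ⟨hg₂, hh₂⟩, rfl⟩
  exact (Commute.prod (hG g₁ hg₁ g₂ hg₂) (hH h₁ hh₁ h₂ hh₂)).map _

end productAction

theorem product_of_transitive_abelian_preprimitive_general
    {Γ Δ : Type*}
    (G : Subgroup (Perm Γ)) (H : Subgroup (Perm Δ))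
    (hG : IsTransitive G) (hH : IsTransitive H)
    (hGab : ∀ g₁ ∈ G, ∀ g₂ ∈ G, g₁ * g₂ = g₂ * g₁)
    (hHab : ∀ h₁ ∈ H, ∀ h₂ ∈ H, h₁ * h₂ = h₂ * h₁) :
    IsPrePrimitive (productAction G H) :=
  isPrePrimitive_of_isTransitive_of_commute (isTransitive_productAction hG hH)
    (commute_of_mem_productAction hGab hHab)

theorem product_of_transitive_abelian_preprimitive
    {Γ Δ : Type*} [Fintype Γ] [Fintype Δ]
    (G : Subgroup (Perm Γ)) (H : Subgroup (Perm Δ))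
    (hG : IsTransitive G) (hH : IsTransitive H)
    (hGab : ∀ g₁ ∈ G, ∀ g₂ ∈ G, g₁ * g₂ = g₂ * g₁)
    (hHab : ∀ h₁ ∈ H, ∀ h₂ ∈ H, h₁ * h₂ = h₂ * h₁) :
    IsPrePrimitive (productAction G H) :=
  product_of_transitive_abelian_preprimitive_general G H hG hH hGab hHab
end

section
/- If G ≤ Sym(Γ) and H ≤ Sym(Δ) are both primitive permutation groups on finite sets, then the direct product G×H in its product action on Γ×Δ is pre-primitive. -/
open Equiv

variable {Ω : Type*}

/-!
A partition `r` invariant under `G × H` is compared with four partitions it induces on the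
factors: `a ~ a'` when `(a, b) r (a', b)` for all `b`, and `a ~ a'` when the fibres over `a`
and `a'` meet the same `r`-classes (and the same on `Δ`). By primitivity each of them is
trivial or universal. If one of the first two is universal, `r` is the product of them and is
realised by a product of subgroups. Otherwise either `r` is trivial, or every class is the graph
of a bijection `Γ → Δ`; then `H` acts regularly, hence, being primitive, has no proper nontrivial
subgroup and is abelian. The element `(g, h)` moving one point of a class to another fixes that
class, and, commuting with `1 × H`, which permutes the classes transitively, it fixes every class.
-/

def classStabilizer (r : Setoid Ω) : Subgroup (Perm Ω) where
  carrier := {g | ∀ x, r (g x) x}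
  mul_mem' hg hh x := r.trans' (hg _) (hh x)
  one_mem' := r.refl'
  inv_mem' {g} hg x := by simpa using r.symm' (hg (g⁻¹ x))

theorem isPrePrimitive_of_exists_mem_inf_classStabilizer {G : Subgroup (Perm Ω)}
    (h : ∀ r, IsInvariantPartition G r → ∀ x y, r x y → ∃ g ∈ G ⊓ classStabilizer r, g x = y) :
    IsPrePrimitive G := fun r hr =>
  ⟨G ⊓ classStabilizer r, inf_le_left, fun x y =>
    ⟨h r hr x y, fun ⟨_, hg, hgx⟩ => hgx ▸ r.symm' (hg.2 x)⟩⟩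

theorem exists_mem_inf_classStabilizer_of_bot_or_top {G : Subgroup (Perm Ω)}
    (hG : IsTransitive G) {r : Setoid Ω} (hr : r = ⊥ ∨ r = ⊤) {x y : Ω} (hxy : r x y) :
    ∃ g ∈ G ⊓ classStabilizer r, g x = y := by
  rcases hr with rfl | rfl
  · exact ⟨1, one_mem _, hxy⟩
  · obtain ⟨g, hg, hgx⟩ := hG x y
    exact ⟨g, ⟨hg, fun _ => trivial⟩, hgx⟩

theorem mem_classStabilizer_of_commute {G : Subgroup (Perm Ω)} {r : Setoid Ω}
    (hr : IsInvariantPartition G r) {π : Perm Ω} (hπ : π ∈ G) {p : Ω} (hp : r (π p) p)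
    (hspread : ∀ z, ∃ n ∈ G, Commute π n ∧ r (n p) z) : π ∈ classStabilizer r := by
  intro z
  obtain ⟨n, hn, hcomm, hnz⟩ := hspread z
  have hπz : r (π z) (π (n p)) := hr π hπ _ _ (r.symm' hnz)
  have hnp : r (n (π p)) (n p) := hr n hn _ _ hp
  rw [← Perm.mul_apply, hcomm.eq, Perm.mul_apply] at hπz
  exact r.trans' hπz (r.trans' hnp hnz)

theorem eq_bot_or_le_of_free [Nonempty Ω] {H N : Subgroup (Perm Ω)} (hH : IsTransitive H)
    (hprim : ∀ r : Setoid Ω, IsInvariantPartition H r → r = ⊥ ∨ r = ⊤)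
    (hfree : ∀ h ∈ H, ∀ x, h x = x → h = 1) (hNH : N ≤ H) : N = ⊥ ∨ H ≤ N := by
  obtain ⟨x₀⟩ := ‹Nonempty Ω›
  have huniq : ∀ h ∈ H, ∀ k ∈ H, h x₀ = k x₀ → h = k := fun h hh k hk hx =>
    (inv_mul_eq_one.mp
      (hfree _ (H.mul_mem (H.inv_mem hk) hh) x₀ (by simp [Perm.mul_apply, hx]))).symm
  choose c hcH hcx using hH x₀
  have hc : ∀ h ∈ H, ∀ x, c (h x) = h * c x := fun h hh x =>
    huniq _ (hcH _) _ (H.mul_mem hh (hcH x)) (by simp [Perm.mul_apply, hcx])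
  have hc₀ : c x₀ = 1 := huniq _ (hcH _) _ H.one_mem (by simp [hcx])
  -- `c` identifies `Ω` with `H`, and this partition with the left cosets of `N`
  let cosets : Setoid Ω := Setoid.ker fun x => (c x : Perm Ω ⧸ N)
  have hcosets : ∀ h ∈ H, cosets x₀ (h x₀) ↔ h ∈ N := by
    intro h hh
    change (c x₀ : Perm Ω ⧸ N) = c (h x₀) ↔ _
    rw [hc h hh, hc₀, mul_one, QuotientGroup.eq, inv_one, one_mul]
  have hinv : IsInvariantPartition H cosets := by
    intro h hh x y hxy
    change (c (h x) : Perm Ω ⧸ N) = c (h y)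
    change (c x : Perm Ω ⧸ N) = c y at hxy
    rw [QuotientGroup.eq] at hxy ⊢
    simpa [hc h hh, mul_assoc] using hxy
  refine (hprim cosets hinv).imp (fun hbot => ?_) fun htop h hh =>
    (hcosets h hh).1 (by rw [htop]; trivial)
  rw [eq_bot_iff]
  intro n hn
  have hn₀ : cosets x₀ (n x₀) := (hcosets n (hNH hn)).2 hn
  rw [hbot] at hn₀
  exact hfree n (hNH hn) x₀ hn₀.symm

theorem commute_of_forall_eq_bot_or_le {M : Type*} [Group M] {H : Subgroup M}
    (hH : ∀ N ≤ H, N = ⊥ ∨ H ≤ N) {a b : M} (ha : a ∈ H) (hb : b ∈ H) : Commute a b := by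
  rcases hH _ (Subgroup.zpowers_le.mpr ha) with h | h
  · rw [Subgroup.zpowers_eq_bot.mp h]
    exact Commute.one_left b
  · obtain ⟨k, rfl⟩ := Subgroup.mem_zpowers_iff.mp (h hb)
    exact (Commute.refl a).zpow_right k

section Product

variable {Γ Δ : Type*} {G : Subgroup (Perm Γ)} {H : Subgroup (Perm Δ)} {r : Setoid (Γ × Δ)}
  {a a' : Γ} {b b' : Δ}

theorem prodPermHom_mem_productAction {g : Perm Γ} {h : Perm Δ} (hg : g ∈ G) (hh : h ∈ H) :
    prodPermHom Γ Δ (g, h) ∈ productAction G H :=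
  Subgroup.mem_map_of_mem _ (Subgroup.mem_prod.mpr ⟨hg, hh⟩)

namespace IsInvariantPartition

theorem rel_fst (hr : IsInvariantPartition (productAction G H) r) {g : Perm Γ} (hg : g ∈ G)
    (hab : r (a, b) (a', b')) : r (g a, b) (g a', b') :=
  hr _ (prodPermHom_mem_productAction hg H.one_mem) _ _ hab

theorem rel_snd (hr : IsInvariantPartition (productAction G H) r) {h : Perm Δ} (hh : h ∈ H)
    (hab : r (a, b) (a', b')) : r (a, h b) (a', h b') :=
  hr _ (prodPermHom_mem_productAction G.one_mem hh) _ _ hab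

theorem comap_swap (hr : IsInvariantPartition (productAction G H) r) :
    IsInvariantPartition (productAction H G) (r.comap Prod.swap) := by
  rintro _ ⟨⟨h, g⟩, hhg, rfl⟩ ⟨b, a⟩ ⟨b', a'⟩ hab
  exact hr _ (prodPermHom_mem_productAction (Subgroup.mem_prod.mp hhg).2
    (Subgroup.mem_prod.mp hhg).1) _ _ hab

end IsInvariantPartition

def fstSetoid (r : Setoid (Γ × Δ)) : Setoid Γ where
  r a a' := ∀ b, r (a, b) (a', b)
  iseqv := ⟨fun _ _ => r.refl' _, fun h b => r.symm' (h b), fun h h' b => r.trans' (h b) (h' b)⟩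

def sndSetoid (r : Setoid (Γ × Δ)) : Setoid Δ := fstSetoid (r.comap Prod.swap)

/-- `a ~ a'` iff the fibres `{a} × Δ` and `{a'} × Δ` meet the same `r`-classes. -/
def fstFiberSetoid (r : Setoid (Γ × Δ)) : Setoid Γ where
  r a a' := (∀ b, ∃ b', r (a, b) (a', b')) ∧ ∀ b', ∃ b, r (a, b) (a', b')
  iseqv :=
    ⟨fun _ => ⟨fun b => ⟨b, r.refl' _⟩, fun b => ⟨b, r.refl' _⟩⟩,
     fun ⟨h₁, h₂⟩ =>
      ⟨fun b => (h₂ b).imp fun _ => r.symm', fun b => (h₁ b).imp fun _ => r.symm'⟩,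
     fun ⟨h₁, h₂⟩ ⟨k₁, k₂⟩ =>
      ⟨fun b => let ⟨_, p⟩ := h₁ b; (k₁ _).imp fun _ => r.trans' p,
       fun b => let ⟨_, p⟩ := k₂ b; (h₂ _).imp fun _ q => r.trans' q p⟩⟩

def sndFiberSetoid (r : Setoid (Γ × Δ)) : Setoid Δ := fstFiberSetoid (r.comap Prod.swap)

theorem isInvariantPartition_fstSetoid (hr : IsInvariantPartition (productAction G H) r) :
    IsInvariantPartition G (fstSetoid r) :=
  fun _ hg _ _ h b => hr.rel_fst hg (h b)

theorem isInvariantPartition_sndSetoid (hr : IsInvariantPartition (productAction G H) r) :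
    IsInvariantPartition H (sndSetoid r) :=
  isInvariantPartition_fstSetoid hr.comap_swap

theorem isInvariantPartition_fstFiberSetoid (hr : IsInvariantPartition (productAction G H) r) :
    IsInvariantPartition G (fstFiberSetoid r) :=
  fun _ hg _ _ ⟨h₁, h₂⟩ =>
    ⟨fun b => (h₁ b).imp fun _ => hr.rel_fst hg, fun b => (h₂ b).imp fun _ => hr.rel_fst hg⟩

theorem isInvariantPartition_sndFiberSetoid (hr : IsInvariantPartition (productAction G H) r) :
    IsInvariantPartition H (sndFiberSetoid r) :=
  isInvariantPartition_fstFiberSetoid hr.comap_swap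

theorem fstSetoid_of_rel (hr : IsInvariantPartition (productAction G H) r) (hH : IsTransitive H)
    (hab : r (a, b) (a', b')) (hb : sndSetoid r b b') : fstSetoid r a a' := by
  have hab' : r (a, b) (a', b) := r.trans' hab (r.symm' (hb a'))
  intro c
  obtain ⟨h, hh, rfl⟩ := hH b c
  exact hr.rel_snd hh hab'

theorem sndSetoid_of_rel (hr : IsInvariantPartition (productAction G H) r) (hG : IsTransitive G)
    (hab : r (a, b) (a', b')) (ha : fstSetoid r a a') : sndSetoid r b b' :=
  fstSetoid_of_rel hr.comap_swap hG hab ha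

theorem fstFiberSetoid_of_rel (hr : IsInvariantPartition (productAction G H) r)
    (hH : IsTransitive H) (hab : r (a, b) (a', b')) : fstFiberSetoid r a a' := by
  constructor
  · intro c
    obtain ⟨h, hh, rfl⟩ := hH b c
    exact ⟨h b', hr.rel_snd hh hab⟩
  · intro c
    obtain ⟨h, hh, rfl⟩ := hH b' c
    exact ⟨h b, hr.rel_snd hh hab⟩

theorem sndFiberSetoid_of_rel (hr : IsInvariantPartition (productAction G H) r)
    (hG : IsTransitive G) (hab : r (a, b) (a', b')) : sndFiberSetoid r b b' :=
  fstFiberSetoid_of_rel hr.comap_swap hG hab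

theorem prodPermHom_mem_classStabilizer {g : Perm Γ} {h : Perm Δ}
    (hg : g ∈ classStabilizer (fstSetoid r)) (hh : h ∈ classStabilizer (sndSetoid r)) :
    prodPermHom Γ Δ (g, h) ∈ classStabilizer r :=
  fun ⟨x, y⟩ => r.trans' (hg x (h y)) (hh y x)

theorem exists_mem_inf_classStabilizer_of_top (hr : IsInvariantPartition (productAction G H) r)
    (hG : IsTransitive G) (hH : IsTransitive H) (hGr : fstSetoid r = ⊥ ∨ fstSetoid r = ⊤)
    (hHr : sndSetoid r = ⊥ ∨ sndSetoid r = ⊤) (htop : fstSetoid r = ⊤ ∨ sndSetoid r = ⊤)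
    (hab : r (a, b) (a', b')) :
    ∃ π ∈ productAction G H ⊓ classStabilizer r, π (a, b) = (a', b') := by
  have hrel : fstSetoid r a a' ∧ sndSetoid r b b' := by
    rcases htop with h | h
    · have ha : fstSetoid r a a' := by rw [h]; trivial
      exact ⟨ha, sndSetoid_of_rel hr hG hab ha⟩
    · have hb : sndSetoid r b b' := by rw [h]; trivial
      exact ⟨fstSetoid_of_rel hr hH hab hb, hb⟩
  obtain ⟨g, ⟨hg, hgr⟩, rfl⟩ := exists_mem_inf_classStabilizer_of_bot_or_top hG hGr hrel.1
  obtain ⟨h, ⟨hh, hhr⟩, rfl⟩ := exists_mem_inf_classStabilizer_of_bot_or_top hH hHr hrel.2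
  exact ⟨_, ⟨prodPermHom_mem_productAction hg hh, prodPermHom_mem_classStabilizer hgr hhr⟩, rfl⟩

theorem eq_one_of_apply_eq_self (hr : IsInvariantPartition (productAction G H) r)
    (hsndInj : ∀ x y y', r (x, y) (x, y') → y = y') (hmeetSnd : ∀ y, ∃ x, r (a, b) (x, y))
    {h : Perm Δ} (hh : h ∈ H) (hb : h b = b) : h = 1 := by
  ext y
  obtain ⟨x, hx⟩ := hmeetSnd y
  have hhx := hr.rel_snd hh hx
  rw [hb] at hhx
  exact (hsndInj x y (h y) (r.trans' (r.symm' hx) hhx)).symm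

/-- The hypotheses say that every `r`-class is the graph of a surjection `Γ → Δ`. -/
theorem exists_mem_inf_classStabilizer_of_graph
    (hr : IsInvariantPartition (productAction G H) r) (hG : IsTransitive G) (hH : IsTransitive H)
    (hHprim : ∀ s : Setoid Δ, IsInvariantPartition H s → s = ⊥ ∨ s = ⊤)
    (hsndInj : ∀ x y y', r (x, y) (x, y') → y = y')
    (hmeetFst : ∀ a x y, ∃ y', r (a, y') (x, y)) (hmeetSnd : ∀ a b y, ∃ x, r (a, b) (x, y))
    (hab : r (a, b) (a', b')) :
    ∃ π ∈ productAction G H ⊓ classStabilizer r, π (a, b) = (a', b') := by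
  have : Nonempty Δ := ⟨b⟩
  have hcomm : ∀ h ∈ H, ∀ k ∈ H, Commute h k :=
    fun _ hh _ hk => commute_of_forall_eq_bot_or_le (fun _ hN => eq_bot_or_le_of_free hH hHprim
      (fun _ hh y hy => eq_one_of_apply_eq_self hr hsndInj (hmeetSnd a y) hh hy) hN) hh hk
  obtain ⟨g, hg, rfl⟩ := hG a a'
  obtain ⟨h, hh, rfl⟩ := hH b b'
  have hπ := prodPermHom_mem_productAction hg hh
  refine ⟨_, ⟨hπ, mem_classStabilizer_of_commute hr hπ (r.symm' hab) ?_⟩, rfl⟩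
  rintro ⟨x, y⟩
  obtain ⟨y', hy'⟩ := hmeetFst a x y
  obtain ⟨k, hk, rfl⟩ := hH b y'
  refine ⟨prodPermHom Γ Δ (1, k), prodPermHom_mem_productAction G.one_mem hk, ?_, hy'⟩
  exact (Prod.commute_iff.mpr ⟨Commute.one_right g, hcomm h hh k hk⟩).map _

theorem exists_mem_inf_classStabilizer_of_bot (hr : IsInvariantPartition (productAction G H) r)
    (hG : IsTransitive G) (hH : IsTransitive H)
    (hGprim : ∀ s : Setoid Γ, IsInvariantPartition G s → s = ⊥ ∨ s = ⊤)
    (hHprim : ∀ s : Setoid Δ, IsInvariantPartition H s → s = ⊥ ∨ s = ⊤)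
    (hGr : fstSetoid r = ⊥) (hHr : sndSetoid r = ⊥) (hab : r (a, b) (a', b')) :
    ∃ π ∈ productAction G H ⊓ classStabilizer r, π (a, b) = (a', b') := by
  have hsndInj : ∀ x y y', r (x, y) (x, y') → y = y' := fun x y y' h => by
    have := sndSetoid_of_rel hr hG h ((fstSetoid r).refl' x)
    rwa [hHr] at this
  by_cases ha : a = a'
  · subst ha
    obtain rfl := hsndInj a b b' hab
    exact ⟨1, one_mem _, rfl⟩
  have hb : b ≠ b' := by
    rintro rfl
    have := fstSetoid_of_rel hr hH hab ((sndSetoid r).refl' b)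
    rw [hGr] at this
    exact ha this
  have hF : fstFiberSetoid r = ⊤ := by
    refine (hGprim _ (isInvariantPartition_fstFiberSetoid hr)).resolve_left fun h => ha ?_
    have := fstFiberSetoid_of_rel hr hH hab
    rwa [h] at this
  have hF' : sndFiberSetoid r = ⊤ := by
    refine (hHprim _ (isInvariantPartition_sndFiberSetoid hr)).resolve_left fun h => hb ?_
    have := sndFiberSetoid_of_rel hr hG hab
    rwa [h] at this
  refine exists_mem_inf_classStabilizer_of_graph hr hG hH hHprim hsndInj (fun a x y => ?_)
    (fun a b y => ?_) hab
  · have hax : fstFiberSetoid r a x := by rw [hF]; trivial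
    exact hax.2 y
  · have hby : sndFiberSetoid r b y := by rw [hF']; trivial
    exact hby.1 a

end Product

theorem product_of_primitive_preprimitive_general
    {Γ Δ : Type*}
    (G : Subgroup (Perm Γ)) (H : Subgroup (Perm Δ))
    (hG : IsTransitive G) (hH : IsTransitive H)
    (hGprim : ∀ r : Setoid Γ, IsInvariantPartition G r → r = ⊥ ∨ r = ⊤)
    (hHprim : ∀ r : Setoid Δ, IsInvariantPartition H r → r = ⊥ ∨ r = ⊤) :
    IsPrePrimitive (productAction G H) := by
  refine isPrePrimitive_of_exists_mem_inf_classStabilizer fun r hr ⟨a, b⟩ ⟨a', b'⟩ hab => ?_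
  have hGr := hGprim _ (isInvariantPartition_fstSetoid hr)
  have hHr := hHprim _ (isInvariantPartition_sndSetoid hr)
  by_cases htop : fstSetoid r = ⊤ ∨ sndSetoid r = ⊤
  · exact exists_mem_inf_classStabilizer_of_top hr hG hH hGr hHr htop hab
  obtain ⟨hGtop, hHtop⟩ := not_or.mp htop
  exact exists_mem_inf_classStabilizer_of_bot hr hG hH hGprim hHprim (hGr.resolve_right hGtop)
    (hHr.resolve_right hHtop) hab

theorem product_of_primitive_preprimitive
    {Γ Δ : Type*} [Fintype Γ] [Fintype Δ]
    (G : Subgroup (Perm Γ)) (H : Subgroup (Perm Δ))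
    (hG : IsTransitive G) (hH : IsTransitive H)
    (hGprim : ∀ r : Setoid Γ, IsInvariantPartition G r → r = ⊥ ∨ r = ⊤)
    (hHprim : ∀ r : Setoid Δ, IsInvariantPartition H r → r = ⊥ ∨ r = ⊤) :
    IsPrePrimitive (productAction G H) :=
  product_of_primitive_preprimitive_general G H hG hH hGprim hHprim
end
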